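/- Let Q be a compact Hausdorff topological space and let H be an infinite-dimensional complex Hilbert space. Then every 2-local derivation Δ on the algebra C(Q, B(H)) of continuous B(H)-valued functions on Q satisfies the Leibniz identity: Δ(xy) = Δ(x)y + xΔ(y) for all x, y ∈ C(Q, B(H)). -/

import Mathlib

/-!
A derivation `D` of `C(Q, A)` is local, `u t = 0 → D u t = 0`: write `u = g * c` with
`g = √‖u‖ • 1` and `c = (√‖u‖)⁻¹ • u` (zero where `u` vanishes), both vanishing at `t`. Letting
`D` act on constant rank-one operators then gives, at each `t`, a (possibly unbounded) linear map
`a` of `H` with `D x t = ⁅a, x t⁆`.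

For `ξ`, `η` with `⟪η, ξ⟫ = 1` let `p` be the rank-one idempotent `ψ ↦ ⟪η, ψ⟫ • ξ`. Matching a
2-local derivation `Δ` on six pairs formed from `x * y`, `x`, `y`, `p`, `y * p`, `p * x` gives
implementing maps whose differences commute with `p`, `y t * p` or `p * x t`. Such a difference
acts on the rank-one operator by a scalar, and comparing the scalars gives
`⟪η, (Δ (x * y) - Δ x * y - x * Δ y) t ξ⟫ = 0` whenever `⟪η, x t ξ⟫` and `⟪η, y t ξ⟫` are
nonzero. These pairs `(ξ, η)` are dense once `x t ≠ 0` and `y t ≠ 0`; otherwise locality makes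
both sides vanish at `t`.
-/

open Filter Topology
open scoped InnerProductSpace

section Locality

theorem continuous_inv_sqrt_norm_smul {𝕜 E : Type*} [RCLike 𝕜] [NormedAddCommGroup E]
    [NormedSpace 𝕜 E] : Continuous fun a : E => ((√‖a‖ : 𝕜))⁻¹ • a := by
  rw [continuous_iff_continuousAt]
  intro a
  rcases eq_or_ne a 0 with rfl | ha
  · have hnorm (b : E) : ‖((√‖b‖ : 𝕜))⁻¹ • b‖ = √‖b‖ := by
      rw [norm_smul, norm_inv, RCLike.norm_ofReal, abs_of_nonneg (Real.sqrt_nonneg _),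
        inv_mul_eq_div, Real.div_sqrt]
    have hsqrt : Tendsto (fun b : E => √‖b‖) (𝓝 0) (𝓝 0) := by
      simpa using continuous_norm.sqrt.tendsto (0 : E)
    simpa [ContinuousAt] using squeeze_zero_norm (fun b => (hnorm b).le) hsqrt
  · have hsqrt : ((√‖a‖ : ℝ) : 𝕜) ≠ 0 := by simpa using ha
    exact ((RCLike.continuous_ofReal.comp continuous_norm.sqrt).continuousAt.inv₀ hsqrt).smul
      continuousAt_id

variable {Q A : Type*} [TopologicalSpace Q] [NormedRing A]

theorem ContinuousMap.exists_mul_eq_of_apply_eq_zero (𝕜 : Type*) [RCLike 𝕜] [NormedAlgebra 𝕜 A]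
    {u : C(Q, A)} {t : Q} (hu : u t = 0) :
    ∃ g c : C(Q, A), g t = 0 ∧ c t = 0 ∧ g * c = u := by
  refine ⟨⟨fun s => ((√‖u s‖ : ℝ) : 𝕜) • 1, by fun_prop⟩,
    ⟨fun s => ((√‖u s‖ : 𝕜))⁻¹ • u s, continuous_inv_sqrt_norm_smul.comp u.continuous⟩,
    by simp [hu], by simp [hu], ?_⟩
  ext1 s
  rcases eq_or_ne (u s) 0 with hs | hs
  · simp [hs]
  · have hsqrt : ((√‖u s‖ : ℝ) : 𝕜) ≠ 0 := by simpa using hs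
    simp [smul_smul, hsqrt]

theorem apply_eq_zero_of_leibniz (𝕜 : Type*) [RCLike 𝕜] [NormedAlgebra 𝕜 A]
    {D : C(Q, A) → C(Q, A)}
    (hD : ∀ a b, D (a * b) = D a * b + a * D b) {u : C(Q, A)} {t : Q} (hu : u t = 0) :
    D u t = 0 := by
  obtain ⟨g, c, hg, hc, rfl⟩ := ContinuousMap.exists_mul_eq_of_apply_eq_zero 𝕜 hu
  simp [hD, hg, hc]

end Locality

section Implementation

variable {Q 𝕜 E : Type*} [TopologicalSpace Q] [RCLike 𝕜] [NormedAddCommGroup E] [NormedSpace 𝕜 E]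

theorem exists_eq_lie_of_leibniz (D : C(Q, E →L[𝕜] E) →ₗ[𝕜] C(Q, E →L[𝕜] E))
    (hD : ∀ a b, D (a * b) = D a * b + a * D b) (t : Q) :
    ∃ a : Module.End 𝕜 E, ∀ x, (D x t : Module.End 𝕜 E) = ⁅a, (x t : Module.End 𝕜 E)⁆ := by
  rcases subsingleton_or_nontrivial E with hE | hE
  · exact ⟨0, fun x => Subsingleton.elim _ _⟩
  obtain ⟨ξ, hξ⟩ := exists_ne (0 : E)
  obtain ⟨f, hf⟩ := SeparatingDual.exists_eq_one (R := 𝕜) hξ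
  let rankOne : E →ₗ[𝕜] C(Q, E →L[𝕜] E) :=
    { toFun := fun ψ => ContinuousMap.const Q (f.smulRight ψ)
      map_add' := fun ψ χ => by ext; simp
      map_smul' := fun c ψ => by ext; simp [smul_comm c] }
  refine ⟨(ContinuousLinearMap.apply 𝕜 E ξ).toLinearMap ∘ₗ
    (ContinuousMap.evalCLM 𝕜 t).toLinearMap ∘ₗ D ∘ₗ rankOne, fun x => ?_⟩
  ext ψ
  have hloc : D (x * rankOne ψ - rankOne (x t ψ)) t = 0 :=
    apply_eq_zero_of_leibniz 𝕜 hD (by ext; simp [rankOne])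
  have := congrArg (· ξ) hloc
  simp only [map_sub, hD] at this
  simpa [rankOne, hf, Ring.lie_def, eq_sub_iff_add_eq, sub_eq_zero] using this

end Implementation

section RankOne

variable {K V : Type*} [Field K] [AddCommGroup V] [Module K V]

theorem LinearMap.exists_smul_of_commute_smulRight {g : Module.Dual K V} {w : V} (hw : g w ≠ 0)
    {u : Module.End K V} (h : Commute u (g.smulRight w)) :
    ∃ μ : K, u w = μ • w ∧ ∀ ψ, g (u ψ) = μ * g ψ := by
  have hcomm (ψ : V) : g ψ • u w = g (u ψ) • w := by
    simpa using LinearMap.congr_fun h.eq ψ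
  refine ⟨g (u w) / g w, by rw [div_eq_inv_mul, mul_smul, ← hcomm, inv_smul_smul₀ hw],
    fun ψ => ?_⟩
  have := congrArg g (hcomm ψ)
  simp only [map_smul, smul_eq_mul] at this
  field_simp
  linear_combination -this

variable {f : Module.Dual K V} {ξ : V} {u : Module.End K V}

theorem LinearMap.eigen_of_commute_smulRight (hξ : f ξ = 1) (h : Commute u (f.smulRight ξ)) :
    u ξ = f (u ξ) • ξ ∧ ∀ ψ, f (u ψ) = f (u ξ) * f ψ := by
  obtain ⟨μ, hμξ, hμ⟩ := exists_smul_of_commute_smulRight (by simp [hξ]) h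
  obtain rfl : μ = f (u ξ) := by simpa [hξ] using (hμ ξ).symm
  exact ⟨hμξ, hμ⟩

theorem LinearMap.eigen_of_commute_mul_smulRight (hξ : f ξ = 1) {Y : Module.End K V}
    (hY : f (Y ξ) ≠ 0) (h : Commute u (Y * f.smulRight ξ)) :
    u (Y ξ) = f (u ξ) • Y ξ ∧ ∀ ψ, f (u ψ) = f (u ξ) * f ψ := by
  have hP : Y * f.smulRight ξ = f.smulRight (Y ξ) := by ext; simp
  obtain ⟨μ, hμξ, hμ⟩ := exists_smul_of_commute_smulRight hY (hP ▸ h)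
  obtain rfl : μ = f (u ξ) := by simpa [hξ] using (hμ ξ).symm
  exact ⟨hμξ, hμ⟩

theorem LinearMap.eigen_of_commute_smulRight_mul (hξ : f ξ = 1) {X : Module.End K V}
    (hX : f (X ξ) ≠ 0) (h : Commute u (f.smulRight ξ * X)) :
    u ξ = f (u ξ) • ξ ∧ ∀ ψ, f (X (u ψ)) = f (u ξ) * f (X ψ) := by
  have hP : f.smulRight ξ * X = (f ∘ₗ X).smulRight ξ := by ext; simp
  obtain ⟨μ, hμξ, hμ⟩ := exists_smul_of_commute_smulRight (g := f ∘ₗ X) hX (hP ▸ h)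
  obtain rfl : μ = f (u ξ) := by simpa [hξ] using (congrArg f hμξ).symm
  exact ⟨hμξ, hμ⟩

theorem commute_sub_of_lie_eq {A : Type*} [Ring A] {a b p : A} (h : ⁅a, p⁆ = ⁅b, p⁆) :
    Commute (a - b) p := by
  rw [Ring.lie_def, Ring.lie_def] at h
  rw [commute_iff_eq, sub_mul, mul_sub, sub_eq_sub_iff_sub_eq_sub, h]

open LinearMap in
theorem apply_lie_mul_eq_of_lie_smulRight_eq (hξ : f ξ = 1) {X Y a b c d e k : Module.End K V}
    (hX : f (X ξ) ≠ 0) (hY : f (Y ξ) ≠ 0)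
    (had : ⁅a, f.smulRight ξ⁆ = ⁅d, f.smulRight ξ⁆)
    (hde : ⁅d, f.smulRight ξ⁆ = ⁅e, f.smulRight ξ⁆)
    (hbd : ⁅b, Y * f.smulRight ξ⁆ = ⁅d, Y * f.smulRight ξ⁆)
    (hdk : ⁅d, Y * f.smulRight ξ⁆ = ⁅k, Y * f.smulRight ξ⁆)
    (hce : ⁅c, f.smulRight ξ * X⁆ = ⁅e, f.smulRight ξ * X⁆)
    (hek : ⁅e, f.smulRight ξ * X⁆ = ⁅k, f.smulRight ξ * X⁆) :
    f (⁅a, X * Y⁆ ξ) = f ((⁅b, X⁆ * Y + X * ⁅c, Y⁆) ξ) := by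
  obtain ⟨ad_ξ, ad_f⟩ := eigen_of_commute_smulRight hξ (commute_sub_of_lie_eq had)
  obtain ⟨de_ξ, -⟩ := eigen_of_commute_smulRight hξ (commute_sub_of_lie_eq hde)
  obtain ⟨bd_Yξ, bd_f⟩ := eigen_of_commute_mul_smulRight hξ hY (commute_sub_of_lie_eq hbd)
  obtain ⟨dk_Yξ, -⟩ := eigen_of_commute_mul_smulRight hξ hY (commute_sub_of_lie_eq hdk)
  obtain ⟨ce_ξ, ce_fX⟩ := eigen_of_commute_smulRight_mul hξ hX (commute_sub_of_lie_eq hce)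
  obtain ⟨-, ek_fX⟩ := eigen_of_commute_smulRight_mul hξ hX (commute_sub_of_lie_eq hek)
  have E1 := ad_f (X (Y ξ))
  have E2 := bd_f (X (Y ξ))
  have E3 := congrArg (fun v => f (X (Y v))) ad_ξ
  have E4 := congrArg (fun v => f (X (Y v))) ce_ξ
  have E5 := congrArg (fun v => f (X v)) bd_Yξ
  have E6 := ce_fX (Y ξ)
  have E7 := congrArg (fun v => f (X (Y v))) de_ξ
  have E8 := congrArg (fun v => f (X v)) dk_Yξ
  have E9 := ek_fX (Y ξ)
  simp only [LinearMap.sub_apply, map_sub, map_smul, smul_eq_mul] at E1 E2 E3 E4 E5 E6 E7 E8 E9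
  simp only [Ring.lie_def, Module.End.mul_apply, LinearMap.sub_apply, LinearMap.add_apply,
    map_sub, map_add]
  linear_combination E1 - E2 - E3 + E5 - E6 + E4 - E7 + E8 - E9

end RankOne

theorem ContinuousLinearMap.dense_setOf_apply_ne_zero {𝕜 E F : Type*} [NontriviallyNormedField 𝕜]
    [NormedAddCommGroup E] [NormedSpace 𝕜 E] [NormedAddCommGroup F] [NormedSpace 𝕜 F]
    {ℓ : E →L[𝕜] F} (hℓ : ℓ ≠ 0) : Dense {x | ℓ x ≠ 0} := by
  refine interior_eq_empty_iff_dense_compl.1 (Set.not_nonempty_iff_eq_empty.1 fun h => hℓ ?_)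
  exact coe_injective (LinearMap.ker_eq_top.1 (Submodule.eq_top_of_nonempty_interior' _ h))

section Density

variable {𝕜 H : Type*} [RCLike 𝕜] [NormedAddCommGroup H] [InnerProductSpace 𝕜 H]

theorem dense_setOf_inner_ne_zero {w : H} (hw : w ≠ 0) : Dense {η : H | ⟪η, w⟫_𝕜 ≠ 0} := by
  have hw' : innerSL 𝕜 w ≠ 0 := by
    rwa [← norm_ne_zero_iff, innerSL_apply_norm, norm_ne_zero_iff]
  refine Dense.mono (fun η (hη : innerSL 𝕜 w η ≠ 0) h₀ => hη ?_)
    (ContinuousLinearMap.dense_setOf_apply_ne_zero hw')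
  rwa [innerSL_apply_apply, inner_eq_zero_symm]

theorem isOpen_setOf_inner_ne_zero (w : H) : IsOpen {η : H | ⟪η, w⟫_𝕜 ≠ 0} :=
  isOpen_ne_fun (continuous_id.inner continuous_const) continuous_const

theorem ContinuousLinearMap.eq_zero_of_forall_inner_apply_eq_zero {T X Y : H →L[𝕜] H} (hX : X ≠ 0)
    (hY : Y ≠ 0)
    (h : ∀ ξ η, ⟪η, ξ⟫_𝕜 = 1 → ⟪η, X ξ⟫_𝕜 ≠ 0 → ⟪η, Y ξ⟫_𝕜 ≠ 0 → ⟪η, T ξ⟫_𝕜 = 0) :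
    T = 0 := by
  have hTξ (ξ : H) (hXξ : X ξ ≠ 0) (hYξ : Y ξ ≠ 0) : T ξ = 0 := by
    have hξ : ξ ≠ 0 := by rintro rfl; simp at hXξ
    let S := {η : H | ⟪η, ξ⟫_𝕜 ≠ 0} ∩ ({η | ⟪η, X ξ⟫_𝕜 ≠ 0} ∩ {η | ⟪η, Y ξ⟫_𝕜 ≠ 0})
    have hS : Dense S := (dense_setOf_inner_ne_zero hξ).inter_of_isOpen_left
      ((dense_setOf_inner_ne_zero hXξ).inter_of_isOpen_left (dense_setOf_inner_ne_zero hYξ)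
        (isOpen_setOf_inner_ne_zero _)) (isOpen_setOf_inner_ne_zero _)
    have hη : Set.EqOn (fun η => ⟪η, T ξ⟫_𝕜) 0 S := by
      rintro η ⟨h₁ : ⟪η, ξ⟫_𝕜 ≠ 0, h₂ : ⟪η, X ξ⟫_𝕜 ≠ 0, h₃ : ⟪η, Y ξ⟫_𝕜 ≠ 0⟩
      have := h ((⟪η, ξ⟫_𝕜)⁻¹ • ξ) η (by simp [inner_smul_right, h₁])
        (by simp [inner_smul_right, h₁, h₂]) (by simp [inner_smul_right, h₁, h₃])
      simpa [inner_smul_right, h₁] using this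
    have := Continuous.ext_on hS (continuous_id.inner continuous_const) continuous_const hη
    exact inner_self_eq_zero.1 (congrFun this (T ξ))
  have hdense : Dense ({ξ | X ξ ≠ 0} ∩ {ξ | Y ξ ≠ 0}) :=
    (X.dense_setOf_apply_ne_zero hX).inter_of_isOpen_left (Y.dense_setOf_apply_ne_zero hY)
      (isOpen_ne_fun X.continuous continuous_const)
  exact DFunLike.coe_injective <| Continuous.ext_on hdense T.continuous continuous_const
    fun ξ hξ => hTξ ξ hξ.1 hξ.2

end Density

def IsTwoLocalDerivation (R : Type*) {A : Type*} [CommSemiring R] [Semiring A] [Module R A]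
    (Δ : A → A) : Prop :=
  ∀ x y, ∃ D : A →ₗ[R] A, (∀ a b, D (a * b) = D a * b + a * D b) ∧ D x = Δ x ∧ D y = Δ y

namespace IsTwoLocalDerivation

variable {Q 𝕜 : Type*} [TopologicalSpace Q] [RCLike 𝕜]

theorem apply_eq_zero {A : Type*} [NormedRing A] [NormedAlgebra 𝕜 A] {Δ : C(Q, A) → C(Q, A)}
    (hΔ : IsTwoLocalDerivation 𝕜 Δ) {u : C(Q, A)} {t : Q} (hu : u t = 0) : Δ u t = 0 := by
  obtain ⟨D, hD, hDu, -⟩ := hΔ u u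
  exact hDu ▸ apply_eq_zero_of_leibniz 𝕜 hD hu

theorem exists_eq_lie {E : Type*} [NormedAddCommGroup E] [NormedSpace 𝕜 E]
    {Δ : C(Q, E →L[𝕜] E) → C(Q, E →L[𝕜] E)} (hΔ : IsTwoLocalDerivation 𝕜 Δ) (x y) (t : Q) :
    ∃ a : Module.End 𝕜 E, (Δ x t : Module.End 𝕜 E) = ⁅a, (x t : Module.End 𝕜 E)⁆ ∧
      (Δ y t : Module.End 𝕜 E) = ⁅a, (y t : Module.End 𝕜 E)⁆ := by
  obtain ⟨D, hD, hDx, hDy⟩ := hΔ x y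
  obtain ⟨a, ha⟩ := exists_eq_lie_of_leibniz D hD t
  exact ⟨a, hDx ▸ ha x, hDy ▸ ha y⟩

theorem inner_apply_mul_eq {H : Type*} [NormedAddCommGroup H] [InnerProductSpace 𝕜 H]
    {Δ : C(Q, H →L[𝕜] H) → C(Q, H →L[𝕜] H)} (hΔ : IsTwoLocalDerivation 𝕜 Δ)
    (x y : C(Q, H →L[𝕜] H)) (t : Q) {ξ η : H} (hηξ : ⟪η, ξ⟫_𝕜 = 1)
    (hX : ⟪η, x t ξ⟫_𝕜 ≠ 0) (hY : ⟪η, y t ξ⟫_𝕜 ≠ 0) :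
    ⟪η, Δ (x * y) t ξ⟫_𝕜 = ⟪η, (Δ x * y + x * Δ y) t ξ⟫_𝕜 := by
  let v := ContinuousMap.const Q ((innerSL 𝕜 η).smulRight ξ)
  obtain ⟨a, ha₁, ha₂⟩ := hΔ.exists_eq_lie (x * y) v t
  obtain ⟨b, hb₁, hb₂⟩ := hΔ.exists_eq_lie x (y * v) t
  obtain ⟨c, hc₁, hc₂⟩ := hΔ.exists_eq_lie y (v * x) t
  obtain ⟨d, hd₁, hd₂⟩ := hΔ.exists_eq_lie (y * v) v t
  obtain ⟨e, he₁, he₂⟩ := hΔ.exists_eq_lie (v * x) v t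
  obtain ⟨k, hk₁, hk₂⟩ := hΔ.exists_eq_lie (y * v) (v * x) t
  simp only [ContinuousMap.mul_apply, ContinuousLinearMap.toLinearMap_mul]
    at ha₁ hb₂ hc₂ hd₁ he₁ hk₁ hk₂
  have := apply_lie_mul_eq_of_lie_smulRight_eq (f := (innerSL 𝕜 η : Module.Dual 𝕜 H))
    (X := x t) (Y := y t) hηξ hX hY (ha₂.symm.trans hd₂) (hd₂.symm.trans he₂)
    (hb₂.symm.trans hd₁) (hd₁.symm.trans hk₁) (hc₂.symm.trans he₁) (he₁.symm.trans hk₂)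
  rw [← ha₁, ← hb₁, ← hc₁] at this
  simpa using this

end IsTwoLocalDerivation

theorem two_local_derivation_on_continuous_BH_valued_functions_leibniz_general
    (Q : Type*) [TopologicalSpace Q]
    (H : Type*) [NormedAddCommGroup H] [InnerProductSpace ℂ H]
    (Δ : C(Q, H →L[ℂ] H) → C(Q, H →L[ℂ] H))
    (h2local : ∀ x y : C(Q, H →L[ℂ] H),
      ∃ D : C(Q, H →L[ℂ] H) →ₗ[ℂ] C(Q, H →L[ℂ] H),
        (∀ a b, D (a * b) = D a * b + a * D b) ∧ D x = Δ x ∧ D y = Δ y) :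
    ∀ x y, Δ (x * y) = Δ x * y + x * Δ y := by
  intro x y
  have hΔ : IsTwoLocalDerivation ℂ Δ := h2local
  ext1 t
  rcases eq_or_ne (x t) 0 with hx | hx
  · have hxy : (x * y) t = 0 := by simp [hx]
    simp [hΔ.apply_eq_zero hx, hΔ.apply_eq_zero hxy, hx]
  rcases eq_or_ne (y t) 0 with hy | hy
  · have hxy : (x * y) t = 0 := by simp [hy]
    simp [hΔ.apply_eq_zero hy, hΔ.apply_eq_zero hxy, hy]
  rw [← sub_eq_zero]
  refine ContinuousLinearMap.eq_zero_of_forall_inner_apply_eq_zero hx hy fun ξ η hηξ hX hY => ?_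
  rw [sub_apply, inner_sub_right, hΔ.inner_apply_mul_eq x y t hηξ hX hY, sub_self]

/-- Every 2-local derivation on the algebra `C(Q, B(H))` of continuous
`B(H)`-valued functions on a compact Hausdorff space `Q`, where `H` is an
infinite-dimensional complex Hilbert space, satisfies the Leibniz identity. -/
theorem two_local_derivation_on_continuous_BH_valued_functions_leibniz
    (Q : Type*) [TopologicalSpace Q] [CompactSpace Q] [T2Space Q]
    (H : Type*) [NormedAddCommGroup H] [InnerProductSpace ℂ H] [CompleteSpace H]
    (hH : ¬ FiniteDimensional ℂ H)
    (Δ : C(Q, H →L[ℂ] H) → C(Q, H →L[ℂ] H))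
    (h2local : ∀ x y : C(Q, H →L[ℂ] H),
      ∃ D : C(Q, H →L[ℂ] H) →ₗ[ℂ] C(Q, H →L[ℂ] H),
        (∀ a b, D (a * b) = D a * b + a * D b) ∧ D x = Δ x ∧ D y = Δ y) :
    ∀ x y, Δ (x * y) = Δ x * y + x * Δ y :=
  two_local_derivation_on_continuous_BH_valued_functions_leibniz_general Q H Δ h2local
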